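/- For a positive integer n > 1, Σ_{m | n} ξ_n(m) = 0, where ξ_n(m) := (λ(n/m)/(n/m)) · (φ(gcd(m, n/m))/gcd(m, n/m)); for n = 1 the sum equals 1. -/

import Mathlib

/-- `λ(k) = ∏_{p | k, p prime} (−p)` as a rational number. -/
noncomputable def lambdaFun (k : ℕ) : ℚ := ∏ p ∈ k.primeFactors, (-(p : ℚ))

/-- `ξ_n(m) = (λ(n/m)/(n/m)) · (φ(gcd(m, n/m))/gcd(m, n/m))`. -/
noncomputable def xiFun (n m : ℕ) : ℚ :=
  (lambdaFun (n / m) / ((n / m : ℕ) : ℚ)) *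
    ((Nat.totient (Nat.gcd m (n / m)) : ℚ) / (Nat.gcd m (n / m) : ℚ))

/-!
`ξ_n(m)` is multiplicative jointly in `(n, m)`: for coprime `a, b` and `d ∣ a`, `e ∣ b` one has
`ξ_{ab}(de) = ξ_a(d) ξ_b(e)`. Since the divisors of `ab` are exactly the products `de`, the
divisor sum `S(n) = Σ_{m ∣ n} ξ_n(m)` is a multiplicative function, so it suffices to show
`S(p^k) = 0` for `k ≥ 1`. With `q = 1/p`, the term at `m = p^k` is `1`, the term at `m = 1` is
`-q^(k-1)`, and the term at `m = p^j`, `0 < j < k`, is `-q^(k-1-j) (1 - q)`; the latter form a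
geometric sum equal to `-(1 - q^(k-1))`, and everything cancels.
-/

open Finset ArithmeticFunction

theorem Nat.Coprime.sum_divisors_mul_eq_sum_product {M : Type*} [AddCommMonoid M] {a b : ℕ}
    (hab : a.Coprime b) (f : ℕ → M) :
    ∑ d ∈ (a * b).divisors, f d = ∑ x ∈ a.divisors ×ˢ b.divisors, f (x.1 * x.2) := by
  rw [hab.divisors_mul, sum_map]
  exact sum_attach _ fun x : ℕ × ℕ => f (x.1 * x.2)

theorem Nat.gcd_pow_pow (p a b : ℕ) : Nat.gcd (p ^ a) (p ^ b) = p ^ min a b := by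
  rcases le_total a b with h | h
  · rw [min_eq_left h, Nat.gcd_eq_left (pow_dvd_pow p h)]
  · rw [min_eq_right h, Nat.gcd_eq_right (pow_dvd_pow p h)]

theorem Nat.totient_prime_pow_div_self {p t : ℕ} (hp : p.Prime) (ht : t ≠ 0) :
    (Nat.totient (p ^ t) : ℚ) / (p ^ t : ℕ) = 1 - (p : ℚ)⁻¹ := by
  have hpt : ((p ^ t : ℕ) : ℚ) ≠ 0 := by exact_mod_cast (pow_pos hp.pos t).ne'
  rw [Nat.totient_eq_mul_prod_factors, Nat.primeFactors_prime_pow ht hp, prod_singleton,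
    mul_div_cancel_left₀ _ hpt]

theorem lambdaFun_mul {a b : ℕ} (hab : a.Coprime b) :
    lambdaFun (a * b) = lambdaFun a * lambdaFun b := by
  rw [lambdaFun, hab.primeFactors_mul, prod_union hab.disjoint_primeFactors, lambdaFun, lambdaFun]

theorem lambdaFun_prime_pow {p k : ℕ} (hp : p.Prime) (hk : k ≠ 0) : lambdaFun (p ^ k) = -p := by
  rw [lambdaFun, Nat.primeFactors_prime_pow hk hp, prod_singleton]

noncomputable def xiSum : ArithmeticFunction ℚ :=
  ⟨fun n => ∑ m ∈ n.divisors, xiFun n m, by simp⟩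

theorem xiSum_apply (n : ℕ) : xiSum n = ∑ m ∈ n.divisors, xiFun n m := rfl

theorem xiFun_mul_mul {a b d e : ℕ} (hab : a.Coprime b) (hd : d ∣ a) (he : e ∣ b) :
    xiFun (a * b) (d * e) = xiFun a d * xiFun b e := by
  have had : a / d ∣ a := Nat.div_dvd_of_dvd hd
  have hbe : b / e ∣ b := Nat.div_dvd_of_dvd he
  have hquot : a * b / (d * e) = (a / d) * (b / e) := (Nat.div_mul_div_comm hd he).symm
  have hquot_coprime : (a / d).Coprime (b / e) := (hab.coprime_dvd_right hbe).coprime_dvd_left had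
  have hgcd : Nat.gcd (d * e) ((a / d) * (b / e)) = Nat.gcd d (a / d) * Nat.gcd e (b / e) := by
    rw [Nat.Coprime.gcd_mul _ hquot_coprime]
    congr 1
    · exact Nat.Coprime.gcd_mul_right_cancel d
        ((hab.symm.coprime_dvd_left he).coprime_dvd_right had)
    · exact Nat.Coprime.gcd_mul_left_cancel e ((hab.coprime_dvd_left hd).coprime_dvd_right hbe)
  have hgcd_coprime : (Nat.gcd d (a / d)).Coprime (Nat.gcd e (b / e)) :=
    (hab.coprime_dvd_right ((Nat.gcd_dvd_left _ _).trans he)).coprime_dvd_left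
      ((Nat.gcd_dvd_left _ _).trans hd)
  rw [xiFun, hquot, hgcd, lambdaFun_mul hquot_coprime, Nat.totient_mul hgcd_coprime]
  push_cast
  rw [xiFun, xiFun]
  ring

theorem xiFun_self {n : ℕ} (hn : n ≠ 0) : xiFun n n = 1 := by
  simp [xiFun, lambdaFun, Nat.div_self (Nat.pos_of_ne_zero hn)]

theorem xiFun_prime_pow_of_lt {p j k : ℕ} (hp : p.Prime) (hjk : j < k) :
    xiFun (p ^ k) (p ^ j) = -(p : ℚ)⁻¹ ^ (k - 1 - j) * if j = 0 then 1 else 1 - (p : ℚ)⁻¹ := by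
  have hp0 : (p : ℚ) ≠ 0 := by exact_mod_cast hp.ne_zero
  have hquot : (p : ℚ) / p ^ (k - j) = (p : ℚ)⁻¹ ^ (k - 1 - j) := by
    rw [show k - j = k - 1 - j + 1 by omega, pow_succ, div_mul_cancel_right₀ hp0, inv_pow]
  rw [xiFun, Nat.pow_div hjk.le hp.pos, Nat.gcd_pow_pow, lambdaFun_prime_pow hp (by omega),
    Nat.cast_pow, neg_div, hquot]
  split_ifs with hj
  · simp [hj]
  · rw [Nat.totient_prime_pow_div_self hp (by omega)]

theorem xiSum_prime_pow {p k : ℕ} (hp : p.Prime) (hk : k ≠ 0) : xiSum (p ^ k) = 0 := by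
  obtain ⟨k, rfl⟩ := Nat.exists_eq_add_one_of_ne_zero hk
  rw [xiSum_apply, Nat.sum_divisors_prime_pow hp, sum_range_succ,
    xiFun_self (pow_ne_zero _ hp.ne_zero),
    sum_congr rfl fun j hj => xiFun_prime_pow_of_lt hp (mem_range.1 hj), sum_range_succ']
  simp only [Nat.add_sub_cancel, Nat.add_eq_zero_iff, one_ne_zero, and_false, if_false,
    if_true, Nat.sub_zero, mul_one]
  have hreflect :
      ∑ i ∈ range k, -(p : ℚ)⁻¹ ^ (k - (i + 1)) = ∑ i ∈ range k, -(p : ℚ)⁻¹ ^ i := by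
    simpa [Nat.sub_sub, add_comm] using sum_range_reflect (fun i => -(p : ℚ)⁻¹ ^ i) k
  rw [← sum_mul, hreflect, sum_neg_distrib, neg_mul, geom_sum_mul_neg]
  ring

theorem isMultiplicative_xiSum : xiSum.IsMultiplicative := by
  refine ⟨by simp [xiSum_apply, xiFun_self], fun {a b} hab => ?_⟩
  rw [xiSum_apply, xiSum_apply, xiSum_apply, hab.sum_divisors_mul_eq_sum_product, sum_mul_sum,
    ← sum_product']
  refine sum_congr rfl fun x hx => ?_
  rw [mem_product, Nat.mem_divisors, Nat.mem_divisors] at hx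
  exact xiFun_mul_mul hab hx.1.1 hx.2.1

theorem xiSum_eq_one : xiSum = 1 := by
  refine (isMultiplicative_xiSum.eq_iff_eq_on_prime_powers _ _ isMultiplicative_one).2
    fun p k hp => ?_
  rcases eq_or_ne k 0 with rfl | hk
  · simp [isMultiplicative_xiSum.map_one]
  · rw [xiSum_prime_pow hp hk, one_apply, if_neg (Nat.one_lt_pow hk hp.one_lt).ne']

theorem sum_xi_total_general (n : ℕ) :
    (∑ m ∈ n.divisors, xiFun n m) = if n = 1 then 1 else 0 := by
  rw [← xiSum_apply, xiSum_eq_one, one_apply]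

/-- For `n > 1`, `Σ_{m | n} ξ_n(m) = 0`; for `n = 1` the sum equals `1`. -/
theorem sum_xi_total (n : ℕ) (hn : 0 < n) :
    (∑ m ∈ n.divisors, xiFun n m) = if n = 1 then 1 else 0 :=
  sum_xi_total_general n
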